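/- arXiv:1309.3429 — 6 statements merged into one kernel-verified Lean document; each statement's English description precedes it below -/
import Mathlib

section
/- If P and Q are rank-one idempotent matrices in M_n(ℂ) with rank(P + Q) = 2 and P + Q has fixed-point space of dimension 2, then P and Q are orthogonal, i.e., PQ = QP = 0. -/
theorem stmt_8 {n : ℕ} (P Q : Matrix (Fin n) (Fin n) ℂ)
    (hP : IsIdempotentElem P) (hQ : IsIdempotentElem Q)
    (hrP : P.rank = 1) (hrQ : Q.rank = 1)
    (hr : (P + Q).rank = 2)
    (hF : Module.finrank ℂ (Module.End.eigenspace (P + Q).mulVecLin 1) = 2) :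
    P * Q = 0 ∧ Q * P = 0 := by
  set A := P + Q with hA
  have hle : Module.End.eigenspace A.mulVecLin 1 ≤ LinearMap.range A.mulVecLin := by
    intro v hv
    rw [Module.End.mem_eigenspace_iff, one_smul] at hv
    exact ⟨v, hv⟩
  have hrank : Module.finrank ℂ (LinearMap.range A.mulVecLin) = 2 := hr
  have heq : Module.End.eigenspace A.mulVecLin 1 = LinearMap.range A.mulVecLin :=
    Submodule.eq_of_le_of_finrank_eq hle (by rw [hF, hrank])
  have hpt : ∀ x, A.mulVecLin (A.mulVecLin x) = A.mulVecLin x := by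
    intro x
    have hm : A.mulVecLin x ∈ Module.End.eigenspace A.mulVecLin 1 := by
      rw [heq]; exact ⟨x, rfl⟩
    rw [Module.End.mem_eigenspace_iff, one_smul] at hm
    exact hm
  have hidem : A * A = A := by
    apply Matrix.toLin'.injective
    rw [Matrix.toLin'_apply', Matrix.toLin'_apply', Matrix.mulVecLin_mul]
    exact LinearMap.ext hpt
  have h0 : P * Q + Q * P = 0 := by
    have e : A = P * Q + Q * P + A := by
      conv_lhs => rw [← hidem]
      rw [hA]
      simp only [Matrix.add_mul, Matrix.mul_add, hP.eq, hQ.eq]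
      abel
    exact (right_eq_add.mp e)
  have h1 : P * Q + P * Q * P = 0 := by
    have := congrArg (fun X => P * X) h0
    simpa [Matrix.mul_add, ← Matrix.mul_assoc, hP.eq] using this
  have h2 : P * Q * P + Q * P = 0 := by
    have := congrArg (fun X => X * P) h0
    simpa [Matrix.add_mul, Matrix.mul_assoc, hP.eq] using this
  have h3 : P * Q = Q * P := by
    have := congrArg (fun X => X - (P * Q * P)) (h1.trans h2.symm)
    simpa using this
  have h4 : P * Q = 0 := by
    have h5 : (2 : ℂ) • (P * Q) = 0 := by
      rw [two_smul]
      rw [h3] at h0 ⊢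
      linear_combination (norm := abel) h0 -- fallback
    have := smul_eq_zero.mp h5
    rcases this with h | h
    · exact absurd h two_ne_zero
    · exact h
  exact ⟨h4, h3 ▸ h4⟩
end

section
/- Let φ : B(X) → B(X) be a linear map satisfying F(A) = F(φ(A)) for all A. Then φ(I) = I, and consequently ker(A) = ker(φ(A)) for all A ∈ B(X). -/
theorem stmt_9 {X : Type*} [NormedAddCommGroup X] [NormedSpace ℂ X]
    [CompleteSpace X] (hdim : 3 ≤ Module.rank ℂ X)
    (φ : (X →L[ℂ] X) →ₗ[ℂ] (X →L[ℂ] X))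
    (h : ∀ A : X →L[ℂ] X, {x : X | A x = x} = {x : X | φ A x = x}) :
    φ 1 = 1 ∧ ∀ A : X →L[ℂ] X, {x : X | A x = 0} = {x : X | φ A x = 0} := by
  have h1 : φ 1 = 1 := by
    ext x
    have : x ∈ {x : X | φ 1 x = x} := by
      rw [← h 1]; simp
    simpa using this
  refine ⟨h1, fun A => ?_⟩
  ext x
  have key : (A + 1) x = x ↔ φ (A + 1) x = x := by
    constructor
    · intro hx
      have : x ∈ {x : X | φ (A + 1) x = x} := (h (A + 1)) ▸ hx
      exact this
    · intro hx
      have : x ∈ {x : X | (A + 1) x = x} := (h (A + 1)).symm ▸ hx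
      exact this
  simp only [map_add, h1, ContinuousLinearMap.add_apply, ContinuousLinearMap.one_apply] at key
  constructor
  · intro hx
    have := key.mp (by simp [Set.mem_setOf_eq] at hx ⊢; simp [hx])
    simpa using this
  · intro hx
    have := key.mpr (by simp [Set.mem_setOf_eq] at hx ⊢; simp [hx])
    simpa using this
end

section
/- Let φ : B(X) → B(X) be a linear map satisfying F(A) = F(φ(A)) for all A ∈ B(X). Then φ(P) = P for every rank-one idempotent P. -/
theorem stmt_10 {X : Type*} [NormedAddCommGroup X] [NormedSpace ℂ X]
    [CompleteSpace X] (hdim : 3 ≤ Module.rank ℂ X)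
    (φ : (X →L[ℂ] X) →ₗ[ℂ] (X →L[ℂ] X))
    (h : ∀ A : X →L[ℂ] X, {x : X | A x = x} = {x : X | φ A x = x})
    (f : X →L[ℂ] ℂ) (u : X) (hfu : f u = 1) :
    φ (f.smulRight u) = f.smulRight u := by
  set P := f.smulRight u with hP
  have hφ1 : φ 1 = 1 := by
    ext x
    have hx : x ∈ {x : X | (1 : X →L[ℂ] X) x = x} := rfl
    rw [h 1] at hx
    exact hx
  have hQu : φ P u = u := by
    have hx : u ∈ {x : X | P x = x} := by
      simp [hP, hfu]
    rw [h P] at hx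
    exact hx
  have hker : ∀ x, f x = 0 → φ P x = 0 := by
    intro x hx0
    have hx : x ∈ {y : X | (1 + P) y = y} := by
      simp [hP, hx0]
    rw [h (1 + P)] at hx
    have hx' : φ (1 + P) x = x := hx
    rw [map_add, hφ1] at hx'
    simpa using hx'
  ext x
  have hdecomp : x = f x • u + (x - f x • u) := by abel
  have h1 : f (x - f x • u) = 0 := by simp [hfu]
  calc φ P x = φ P (f x • u + (x - f x • u)) := by rw [← hdecomp]
    _ = f x • φ P u + φ P (x - f x • u) := by rw [map_add, map_smul]
    _ = f x • u := by rw [hQu, hker _ h1, add_zero]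
    _ = P x := by simp [hP]
end

section
/- Let X be a complex Banach space with dim X ≥ 3 and let φ : B(X) → B(X) be a surjective linear map satisfying F(A) = F(φ(A)) for all A ∈ B(X). Then φ(A) = A for all A ∈ B(X). -/
theorem stmt_11 {X : Type*} [NormedAddCommGroup X] [NormedSpace ℂ X]
    [CompleteSpace X] (hdim : 3 ≤ Module.rank ℂ X)
    (φ : (X →L[ℂ] X) →ₗ[ℂ] (X →L[ℂ] X)) (hsurj : Function.Surjective φ)
    (h : ∀ A : X →L[ℂ] X, {x : X | A x = x} = {x : X | φ A x = x}) :
    ∀ A : X →L[ℂ] X, φ A = A := by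
  -- fixed point membership, pointwise
  have h' : ∀ (A : X →L[ℂ] X) (x : X), A x = x ↔ φ A x = x := by
    intro A x
    have := h A
    constructor
    · intro hx; have : x ∈ {x : X | φ A x = x} := this ▸ hx; exact this
    · intro hx; have : x ∈ {x : X | A x = x} := this.symm ▸ hx; exact this
  -- φ 1 = 1
  have hI : φ 1 = 1 := by
    ext x
    have := (h' 1 x).1 (by simp)
    simpa using this
  -- kernels are preserved
  have hker : ∀ (A : X →L[ℂ] X) (x : X), A x = 0 → φ A x = 0 := by
    intro A x hx
    have := (h' (1 + A) x).1 (by simp [hx])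
    rw [map_add, hI] at this
    simpa using this
  -- φ fixes rank one operators f.smulRight y when f y ≠ 0
  have hB : ∀ (f : X →L[ℂ] ℂ) (y : X), f y ≠ 0 → φ (f.smulRight y) = f.smulRight y := by
    intro f y hfy
    have hu : ∃ u : X, f u = 1 := by
      refine ⟨(f y)⁻¹ • y, ?_⟩
      simp [inv_mul_cancel₀ hfy]
    obtain ⟨u, hu⟩ := hu
    set z := φ (f.smulRight y) u with hz
    have hfac : φ (f.smulRight y) = f.smulRight z := by
      ext x
      have hk : f (x - f x • u) = 0 := by simp [hu]
      have h0 : (f.smulRight y) (x - f x • u) = 0 := by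
        simp [ContinuousLinearMap.smulRight_apply, hk]
      have h1 : φ (f.smulRight y) (x - f x • u) = 0 := hker _ _ h0
      have h2 : φ (f.smulRight y) x = f x • z := by
        have := h1
        rw [map_sub, map_smul, sub_eq_zero] at this
        simpa [hz] using this
      simpa [ContinuousLinearMap.smulRight_apply] using h2
    -- consider B = (f y)⁻¹ • (f.smulRight y), which fixes y
    have hBy : ((f y)⁻¹ • (f.smulRight y)) y = y := by
      simp [ContinuousLinearMap.smulRight_apply, smul_smul, inv_mul_cancel₀ hfy]
    have hfix := (h' ((f y)⁻¹ • (f.smulRight y)) y).1 hBy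
    rw [map_smul, hfac] at hfix
    have hzy : z = y := by
      have : ((f y)⁻¹ * f y) • z = y := by
        simpa [ContinuousLinearMap.smulRight_apply, smul_smul] using hfix
      simpa [inv_mul_cancel₀ hfy] using this
    rw [hfac, hzy]
  -- φ fixes all rank one operators
  have hrank1 : ∀ (f : X →L[ℂ] ℂ) (y : X), φ (f.smulRight y) = f.smulRight y := by
    intro f y
    by_cases hy : y = 0
    · have : f.smulRight y = 0 := by ext x; simp [hy]
      rw [this, map_zero]
    by_cases hfy : f y = 0
    · obtain ⟨g, hg⟩ := SeparatingDual.exists_eq_one (R := ℂ) hy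
      have hadd : (f + g).smulRight y = f.smulRight y + g.smulRight y := by
        ext x; simp [ContinuousLinearMap.smulRight_apply, add_smul]
      have h1 : φ ((f + g).smulRight y) = (f + g).smulRight y :=
        hB (f + g) y (by simp [hfy, hg])
      have h2 : φ (g.smulRight y) = g.smulRight y := hB g y (by simp [hg])
      have := h1
      rw [hadd, map_add, h2] at this
      exact add_right_cancel this
    · exact hB f y hfy
  -- conclude
  intro A
  ext x
  by_cases hx : x = 0
  · simp [hx]
  obtain ⟨f, hf⟩ := SeparatingDual.exists_eq_one (R := ℂ) hx
  set y := x - A x with hy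
  have hBx : (A + f.smulRight y) x = x := by
    simp [ContinuousLinearMap.smulRight_apply, hf, hy]
  have hfix := (h' (A + f.smulRight y) x).1 hBx
  rw [map_add, hrank1] at hfix
  have : φ A x + (x - A x) = x := by
    simpa [ContinuousLinearMap.smulRight_apply, hf, hy] using hfix
  have := this
  linear_combination (norm := abel) this
end

section
/- Let n ≥ 3 and φ : M_n(ℂ) → M_n(ℂ) a surjective linear map with dim F(A) = dim F(φ(A)) for all A. Then φ maps rank-one idempotents to rank-one idempotents. -/
open Module LinearMap

lemma idem_eig {n : ℕ} (P : Matrix (Fin n) (Fin n) ℂ) (hP : IsIdempotentElem P) :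
    Module.End.eigenspace P.mulVecLin 1 = LinearMap.range P.mulVecLin := by
  ext v
  rw [Module.End.mem_eigenspace_iff, one_smul]
  constructor
  · intro hv; exact ⟨v, hv⟩
  · rintro ⟨w, rfl⟩
    have := congrArg Matrix.mulVecLin hP
    rw [Matrix.mulVecLin_mul] at this
    exact congrFun (congrArg DFunLike.coe this) w

theorem stmt_12 {n : ℕ} (hn : 3 ≤ n)
    (φ : Matrix (Fin n) (Fin n) ℂ →ₗ[ℂ] Matrix (Fin n) (Fin n) ℂ)
    (hsurj : Function.Surjective φ)
    (h : ∀ A : Matrix (Fin n) (Fin n) ℂ,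
      Module.finrank ℂ (Module.End.eigenspace A.mulVecLin 1)
        = Module.finrank ℂ (Module.End.eigenspace (φ A).mulVecLin 1))
    (P : Matrix (Fin n) (Fin n) ℂ) (hP : IsIdempotentElem P) (hrP : P.rank = 1) :
    IsIdempotentElem (φ P) ∧ (φ P).rank = 1 := by
  set B := φ P with hB
  -- dim eigenspace of B at 1 = 1
  have hPdim : Module.finrank ℂ (Module.End.eigenspace P.mulVecLin 1) = 1 := by
    rw [idem_eig P hP]; exact hrP
  have hBdim : Module.finrank ℂ (Module.End.eigenspace B.mulVecLin 1) = 1 := by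
    rw [← h P]; exact hPdim
  -- get a fixed vector v ≠ 0 of B
  obtain ⟨v, hv, hv0⟩ : ∃ v ∈ Module.End.eigenspace B.mulVecLin 1, v ≠ 0 := by
    by_contra hc
    push_neg at hc
    have : Module.End.eigenspace B.mulVecLin 1 = ⊥ := by
      rw [Submodule.eq_bot_iff]; intro x hx; by_contra hx0; exact hx0 (hc x hx)
    rw [this, finrank_bot] at hBdim; omega
  rw [Module.End.mem_eigenspace_iff, one_smul] at hv
  -- A₀ with φ A₀ = 1
  obtain ⟨A₀, hA₀⟩ := hsurj 1
  -- dim eigenspace A₀ at 1 = n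
  have hA₀dim : Module.finrank ℂ (Module.End.eigenspace A₀.mulVecLin 1) = n := by
    rw [h A₀, hA₀, Matrix.mulVecLin_one]
    have : Module.End.eigenspace (LinearMap.id : (Fin n → ℂ) →ₗ[ℂ] (Fin n → ℂ)) 1 = ⊤ := by
      rw [eq_top_iff]; intro x _
      rw [Module.End.mem_eigenspace_iff, one_smul]; rfl
    rw [this, finrank_top, Module.finrank_pi]
    simp
  -- key inequality: dim eigenspace (P+A₀) at 1 ≥ n - 1
  have hker : Module.finrank ℂ (LinearMap.ker P.mulVecLin) = n - 1 := by
    have := LinearMap.finrank_range_add_finrank_ker P.mulVecLin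
    rw [Module.finrank_pi] at this
    simp only [Fintype.card_fin] at this
    have hr : Module.finrank ℂ (LinearMap.range P.mulVecLin) = 1 := hrP
    omega
  have hsub : Module.End.eigenspace A₀.mulVecLin 1 ⊓ LinearMap.ker P.mulVecLin
      ≤ Module.End.eigenspace (P + A₀).mulVecLin 1 := by
    intro x hx
    obtain ⟨hx1, hx2⟩ := Submodule.mem_inf.mp hx
    rw [Module.End.mem_eigenspace_iff] at hx1
    rw [one_smul] at hx1
    rw [Module.End.mem_eigenspace_iff, one_smul]
    rw [LinearMap.mem_ker] at hx2
    rw [Matrix.mulVecLin_add]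
    simp [hx1, hx2]
  have hsum : Module.finrank ℂ (Module.End.eigenspace (P + A₀).mulVecLin 1) ≥ n - 1 := by
    have hle := Submodule.finrank_mono hsub
    have heq := Submodule.finrank_sup_add_finrank_inf_eq
      (Module.End.eigenspace A₀.mulVecLin 1) (LinearMap.ker P.mulVecLin)
    set s : Submodule ℂ (Fin n → ℂ) := Module.End.eigenspace A₀.mulVecLin 1 ⊔ LinearMap.ker P.mulVecLin with hs
    have htop : Module.finrank ℂ s ≤ n := by
      have := Submodule.finrank_le s
      rwa [Module.finrank_pi, Fintype.card_fin] at this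
    omega
  -- transfer: dim eigenspace (B+1) at 1 ≥ n-1, i.e. dim ker B ≥ n-1
  have hB1 : Module.End.eigenspace (B + 1).mulVecLin 1 = LinearMap.ker B.mulVecLin := by
    ext x
    rw [Module.End.mem_eigenspace_iff, one_smul, LinearMap.mem_ker, Matrix.mulVecLin_add,
      Matrix.mulVecLin_one]
    constructor
    · intro hx
      have : B.mulVecLin x + x = x := hx
      simpa using this
    · intro hx
      show B.mulVecLin x + x = x
      simp [hx]
  have hkerB : Module.finrank ℂ (LinearMap.ker B.mulVecLin) ≥ n - 1 := by
    have := h (P + A₀)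
    rw [map_add, hA₀, ← hB, hB1] at this
    omega
  have hrkB : B.rank ≤ 1 := by
    have := LinearMap.finrank_range_add_finrank_ker B.mulVecLin
    rw [Module.finrank_pi] at this
    simp only [Fintype.card_fin] at this
    have : B.rank + Module.finrank ℂ (LinearMap.ker B.mulVecLin) = n := this
    omega
  -- range B = span v
  have hvmem : v ∈ LinearMap.range B.mulVecLin := ⟨v, hv⟩
  have hspan : Submodule.span ℂ {v} ≤ LinearMap.range B.mulVecLin := by
    rw [Submodule.span_le, Set.singleton_subset_iff]; exact hvmem
  have hspandim : Module.finrank ℂ (Submodule.span ℂ ({v} : Set (Fin n → ℂ))) = 1 :=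
    finrank_span_singleton hv0
  have hrange : LinearMap.range B.mulVecLin = Submodule.span ℂ {v} := by
    refine (Submodule.eq_of_le_of_finrank_le hspan ?_).symm
    rw [hspandim]; exact hrkB
  -- idempotent
  have hidem : IsIdempotentElem B := by
    have hcomp : B.mulVecLin ∘ₗ B.mulVecLin = B.mulVecLin := by
      apply LinearMap.ext
      intro w
      have hw : B.mulVecLin w ∈ Submodule.span ℂ ({v} : Set (Fin n → ℂ)) := by
        rw [← hrange]; exact ⟨w, rfl⟩
      obtain ⟨c, hc⟩ := Submodule.mem_span_singleton.mp hw
      simp only [LinearMap.comp_apply]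
      rw [← hc, map_smul, hv]
    have : (B * B).mulVecLin = B.mulVecLin := by rw [Matrix.mulVecLin_mul]; exact hcomp
    exact Matrix.toLin'.injective this
  have hrank1 : B.rank = 1 := by
    have hpos : 0 < B.rank := by
      rw [Matrix.rank]
      have : LinearMap.range B.mulVecLin ≠ ⊥ := by
        rw [hrange]
        simp [Submodule.span_singleton_eq_bot, hv0]
      have : Nontrivial (LinearMap.range B.mulVecLin) := Submodule.nontrivial_iff_ne_bot.mpr this
      exact Module.finrank_pos
    omega
  exact ⟨hidem, hrank1⟩
end

section
/- Let n ≥ 3 and φ : M_n(ℂ) → M_n(ℂ) a surjective linear map with dim F(A) = dim F(φ(A)) for all A ∈ M_n(ℂ). If P and Q are orthogonal rank-one idempotents (PQ = QP = 0), then φ(P) and φ(Q) are orthogonal rank-one idempotents. -/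
open Module

private lemma mulVec_ext' {n : ℕ} {A B : Matrix (Fin n) (Fin n) ℂ}
    (hx : ∀ x, A.mulVec x = B.mulVec x) : A = B := by
  ext i j
  have := congrFun (hx (Pi.single j 1)) i
  simpa [Matrix.mulVec_single] using this

private lemma fix_le_range' {n : ℕ} (M : Matrix (Fin n) (Fin n) ℂ) :
    Module.End.eigenspace M.mulVecLin 1 ≤ LinearMap.range M.mulVecLin := by
  intro x hx
  rw [Module.End.mem_eigenspace_iff, one_smul] at hx
  exact ⟨x, hx⟩

private lemma idem_fix_eq_range' {n : ℕ} {M : Matrix (Fin n) (Fin n) ℂ}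
    (hM : IsIdempotentElem M) :
    Module.End.eigenspace M.mulVecLin 1 = LinearMap.range M.mulVecLin := by
  refine le_antisymm (fix_le_range' M) ?_
  rintro x ⟨y, rfl⟩
  rw [Module.End.mem_eigenspace_iff, one_smul]
  have : (M * M).mulVec y = M.mulVec y := by rw [hM]
  simpa [Matrix.mulVecLin_apply, Matrix.mulVec_mulVec] using this

private lemma idem_of_fix_eq_rank' {n : ℕ} {M : Matrix (Fin n) (Fin n) ℂ}
    (h : Module.finrank ℂ (Module.End.eigenspace M.mulVecLin 1) = M.rank) :
    IsIdempotentElem M := by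
  have heq : Module.End.eigenspace M.mulVecLin 1 = LinearMap.range M.mulVecLin :=
    Submodule.eq_of_le_of_finrank_eq (fix_le_range' M) h
  refine mulVec_ext' (fun x => ?_)
  have hmem : M.mulVec x ∈ LinearMap.range M.mulVecLin := ⟨x, rfl⟩
  rw [← heq, Module.End.mem_eigenspace_iff, one_smul, Matrix.mulVecLin_apply] at hmem
  rw [← Matrix.mulVec_mulVec, hmem]

theorem stmt_13 {n : ℕ} (hn : 3 ≤ n)
    (φ : Matrix (Fin n) (Fin n) ℂ →ₗ[ℂ] Matrix (Fin n) (Fin n) ℂ)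
    (hsurj : Function.Surjective φ)
    (h : ∀ A : Matrix (Fin n) (Fin n) ℂ,
      Module.finrank ℂ (Module.End.eigenspace A.mulVecLin 1)
        = Module.finrank ℂ (Module.End.eigenspace (φ A).mulVecLin 1))
    (P Q : Matrix (Fin n) (Fin n) ℂ)
    (hP : IsIdempotentElem P) (hQ : IsIdempotentElem Q)
    (hrP : P.rank = 1) (hrQ : Q.rank = 1)
    (hPQ : P * Q = 0) (hQP : Q * P = 0) :
    IsIdempotentElem (φ P) ∧ IsIdempotentElem (φ Q) ∧
      (φ P).rank = 1 ∧ (φ Q).rank = 1 ∧ φ P * φ Q = 0 ∧ φ Q * φ P = 0 := by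
  have hfinrank_pi : Module.finrank ℂ (Fin n → ℂ) = n := by simp
  -- φ 1 = 1
  have hone : Module.End.eigenspace (1 : Matrix (Fin n) (Fin n) ℂ).mulVecLin 1 = ⊤ := by
    ext x
    simp [Module.End.mem_eigenspace_iff, Matrix.mulVecLin_apply, Matrix.one_mulVec]
  have hφ1 : φ 1 = 1 := by
    have h1 := h 1
    rw [hone, finrank_top, hfinrank_pi] at h1
    have htop : Module.End.eigenspace (φ 1).mulVecLin 1 = ⊤ :=
      Submodule.eq_top_of_finrank_eq (by rw [← h1, hfinrank_pi])
    refine mulVec_ext' (fun x => ?_)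
    have hx : x ∈ Module.End.eigenspace (φ 1).mulVecLin 1 := htop ▸ Submodule.mem_top
    rw [Module.End.mem_eigenspace_iff, one_smul, Matrix.mulVecLin_apply] at hx
    rw [hx, Matrix.one_mulVec]
  -- rank preservation
  have hker : ∀ A : Matrix (Fin n) (Fin n) ℂ,
      Module.End.eigenspace (1 + A).mulVecLin 1 = LinearMap.ker A.mulVecLin := by
    intro A
    ext x
    simp only [Module.End.mem_eigenspace_iff, one_smul, Matrix.mulVecLin_apply,
      LinearMap.mem_ker, Matrix.add_mulVec, Matrix.one_mulVec]
    constructor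
    · intro hx; have := congrArg (fun y => y - x) hx; simpa using this
    · intro hx; rw [hx, add_zero]
  have hrank : ∀ A : Matrix (Fin n) (Fin n) ℂ, (φ A).rank = A.rank := by
    intro A
    have hA := h (1 + A)
    rw [map_add, hφ1, hker A, hker (φ A)] at hA
    have e1 := LinearMap.finrank_range_add_finrank_ker A.mulVecLin
    have e2 := LinearMap.finrank_range_add_finrank_ker (φ A).mulVecLin
    rw [hfinrank_pi] at e1 e2
    show Module.finrank ℂ (LinearMap.range (φ A).mulVecLin)
      = Module.finrank ℂ (LinearMap.range A.mulVecLin)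
    omega
  -- fix dim of idempotents = rank; transferring through φ
  have hidem : ∀ M : Matrix (Fin n) (Fin n) ℂ, IsIdempotentElem M →
      IsIdempotentElem (φ M) := by
    intro M hM
    refine idem_of_fix_eq_rank' ?_
    rw [← h M, hrank M, idem_fix_eq_range' hM]
    rfl
  have hEP : IsIdempotentElem (φ P) := hidem P hP
  have hEQ : IsIdempotentElem (φ Q) := hidem Q hQ
  have hSP : IsIdempotentElem (P + Q) := by
    unfold IsIdempotentElem at *
    rw [add_mul, mul_add, mul_add, hP, hQ, hPQ, hQP, add_zero, zero_add]
  have hES : IsIdempotentElem (φ P + φ Q) := by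
    rw [← map_add]; exact hidem _ hSP
  -- EF + FE = 0
  set E := φ P
  set F := φ Q
  have hsum : E * F + F * E = 0 := by
    have hES' : (E + F) * (E + F) = E + F := hES
    rw [add_mul, mul_add, mul_add, hEP, hEQ] at hES'
    calc E * F + F * E = E + E * F + (F * E + F) - (E + F) := by abel
      _ = (E + F) - (E + F) := by rw [hES']
      _ = 0 := sub_self _
  have hcomm : E * F = F * E := by
    have h1 : E * F + E * F * E = 0 := by
      have h1' := congrArg (fun X => E * X) hsum
      simp only [mul_add, ← mul_assoc, mul_zero] at h1'
      rwa [hEP.eq] at h1'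
    have h2 : E * F * E + F * E = 0 := by
      have h2' := congrArg (fun X => X * E) hsum
      simp only [add_mul, zero_mul] at h2'
      rwa [mul_assoc F E E, hEP.eq] at h2' 
    have h1' : E * F = -(E * F * E) := eq_neg_of_add_eq_zero_left h1
    have h2' : F * E = -(E * F * E) := eq_neg_of_add_eq_zero_right h2
    rw [h1', h2']
  have hEF0 : E * F = 0 := by
    have : E * F + E * F = 0 := by rw [hcomm] at hsum ⊢; exact hsum
    have h2 : (2 : ℂ) • (E * F) = 0 := by rw [two_smul]; exact this
    simpa using smul_eq_zero.mp h2
  have hFE0 : F * E = 0 := by rw [← hcomm]; exact hEF0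
  exact ⟨hEP, hEQ, by rw [hrank P, hrP], by rw [hrank Q, hrQ], hEF0, hFE0⟩
end
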